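/- arXiv:2011.10146 — 3 statements merged into one kernel-verified Lean document; each statement's English description precedes it below -/
import Mathlib

section
/- Let (Ω, T, μ) be a topologically mixing subshift of finite type with μ a T-ergodic probability measure having the bounded distortion property, and let f be α-Hölder continuous on Ω. Then for every ε > 0 there exist constants C, c > 0 such that for all n ≥ 1: μ{ω ∈ Ω : |(1/n)Σ_{k=0}^{n-1} f(T^k ω) − ∫ f dμ| ≥ ε} < C e^{-cn}. -/
open MeasureTheory
open scoped Classical NNReal ENNReal

def shift {A : Type*} (ω : ℤ → A) : ℤ → A := fun n => ω (n + 1)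

def cylinder {A : Type*} (n : ℤ) (w : List A) : Set (ℤ → A) :=
  {ω | ∀ i : Fin w.length, ω (n + (i : ℕ)) = w.get i}

noncomputable def shiftDist {A : Type*} (ω ω' : ℤ → A) : ℝ :=
  if ω = ω' then 0
  else Real.exp (-((sSup {N : ℕ | ∀ n : ℤ, |n| < (N : ℤ) → ω n = ω' n} : ℕ) : ℝ))

/-!
The Hölder function `f` is uniformly close on `Ω` to a function `g` of finitely many coordinates,
so it suffices to bound large deviations of `h = g - ∫ g`. By the mean ergodic theorem there is a
block length `L` for which the event "the `L`-step average of `h` is at least `β / 4`" has small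
measure `δ`. If `|∑_{k<n} h ∘ Tᵏ| ≥ n β`, a fixed proportion of the `n / L` consecutive blocks of
length `L` are bad. The bad events of blocks of the same parity depend on ordered, disjoint windows
of coordinates, so by bounded distortion `k` given blocks are all bad with probability at most
`(C₀ δ) ^ k`. Summing over the at most `2 ^ (n / L)` choices of blocks gives a bound exponentially
small in `n` once `C₀ δ` is small.
-/

section

open Set Filter Topology

section Birkhoff
variable {α : Type*} {T : α → α} {g : α → ℝ} {B : ℝ}

theorem abs_birkhoffSum_le {s : Set α} (hT : MapsTo T s s) (hg : ∀ x ∈ s, |g x| ≤ B) {x : α}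
    (hx : x ∈ s) (n : ℕ) : |birkhoffSum T g n x| ≤ n * B := by
  calc |birkhoffSum T g n x| ≤ ∑ k ∈ Finset.range n, |g (T^[k] x)| := Finset.abs_sum_le_sum_abs _ _
    _ ≤ ∑ _k ∈ Finset.range n, B := Finset.sum_le_sum fun k _ => hg _ (hT.iterate k hx)
    _ = n * B := by simp

theorem birkhoffSum_sub_const (c : ℝ) (n : ℕ) (x : α) :
    birkhoffSum T (fun y => g y - c) n x = birkhoffSum T g n x - n * c := by
  simp [birkhoffSum, Finset.sum_sub_distrib]

theorem birkhoffSum_mul_eq_sum (q L : ℕ) (x : α) :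
    birkhoffSum T g (q * L) x = ∑ i ∈ Finset.range q, birkhoffSum T g L (T^[i * L] x) := by
  induction q with
  | zero => simp [birkhoffSum_zero]
  | succ q ih => rw [Finset.sum_range_succ, ← ih, ← birkhoffSum_add, Nat.succ_mul]

theorem abs_birkhoffSum_mul_le (hB : ∀ x, |g x| ≤ B) {η : ℝ} (hη : 0 ≤ η) (L q : ℕ) (x : α) :
    |birkhoffSum T g (q * L) x| ≤
      ((Finset.range q).filter (fun i => η ≤ |birkhoffAverage ℝ T g L (T^[i * L] x)|)).card *
        (L * B) + q * (L * η) := by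
  have hgood : ∀ y, |birkhoffAverage ℝ T g L y| < η → |birkhoffSum T g L y| ≤ L * η := by
    intro y hy
    rcases Nat.eq_zero_or_pos L with rfl | hL
    · simp [birkhoffSum_zero]
    rw [birkhoffAverage, smul_eq_mul, abs_mul, abs_inv, Nat.abs_cast,
      inv_mul_lt_iff₀ (by positivity)] at hy
    exact hy.le
  rw [birkhoffSum_mul_eq_sum, ← Finset.sum_filter_add_sum_filter_not _
    (fun i => η ≤ |birkhoffAverage ℝ T g L (T^[i * L] x)|)]
  refine (abs_add_le _ _).trans (add_le_add ?_ ?_)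
  · refine (Finset.abs_sum_le_sum_abs _ _).trans ((Finset.sum_le_card_nsmul _ _ _ fun i _ =>
      abs_birkhoffSum_le (mapsTo_univ T univ) (fun y _ => hB y) (mem_univ _) L).trans ?_)
    simp
  · refine (Finset.abs_sum_le_sum_abs _ _).trans ((Finset.sum_le_card_nsmul _ _ _ fun i hi =>
      hgood _ (not_le.1 (Finset.mem_filter.1 hi).2)).trans ?_)
    rw [nsmul_eq_mul]
    gcongr
    exact_mod_cast (Finset.card_filter_le _ _).trans (Finset.card_range q).le

theorem mul_le_card_filter_of_le_abs_birkhoffSum (hB : ∀ x, |g x| ≤ B) {β : ℝ} (hβ : 0 < β)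
    {L n : ℕ} (hL : 0 < L) (hn : 4 * (L * B) ≤ n * β) {x : α}
    (hx : n * β ≤ |birkhoffSum T g n x|) :
    (n / L : ℕ) * β ≤
      2 * B * ((Finset.range (n / L)).filter
        (fun i => β / 4 ≤ |birkhoffAverage ℝ T g L (T^[i * L] x)|)).card := by
  set q := n / L
  have hB0 : 0 ≤ B := (abs_nonneg _).trans (hB x)
  have hqL : (q : ℝ) * L ≤ n := by exact_mod_cast Nat.div_mul_le_self n L
  have hrem : |birkhoffSum T g (n % L) (T^[q * L] x)| ≤ L * B :=
    (abs_birkhoffSum_le (mapsTo_univ T univ) (fun y _ => hB y) (mem_univ _) _).trans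
      (by gcongr; exact_mod_cast (Nat.mod_lt n hL).le)
  have hblocks := abs_birkhoffSum_mul_le (T := T) hB (by positivity : 0 ≤ β / 4) L q x
  have hsplit : birkhoffSum T g n x =
      birkhoffSum T g (q * L) x + birkhoffSum T g (n % L) (T^[q * L] x) := by
    rw [← birkhoffSum_add, Nat.div_add_mod']
  rw [hsplit] at hx
  have key : (q : ℝ) * β * L ≤ 2 * B * ((Finset.range q).filter
      (fun i => β / 4 ≤ |birkhoffAverage ℝ T g L (T^[i * L] x)|)).card * L := by
    linarith [abs_add_le (birkhoffSum T g (q * L) x) (birkhoffSum T g (n % L) (T^[q * L] x)),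
      mul_le_mul_of_nonneg_right hqL hβ.le]
  exact le_of_mul_le_mul_right key (by exact_mod_cast hL)

theorem measurable_birkhoffAverage [MeasurableSpace α] (hT : Measurable T) (hg : Measurable g)
    (n : ℕ) : Measurable (birkhoffAverage ℝ T g n) := by
  unfold birkhoffAverage birkhoffSum
  fun_prop

theorem mul_le_abs_birkhoffSum_sub_const {s : Set α} (hT : MapsTo T s s) {f : α → ℝ}
    {η a b ε : ℝ} (hfg : ∀ x ∈ s, |f x - g x| ≤ η) (hab : |a - b| ≤ η) {n : ℕ} {x : α}
    (hx : x ∈ s) (hε : ε ≤ |(n : ℝ)⁻¹ * birkhoffSum T f n x - a|) :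
    n * (ε - 2 * η) ≤ |birkhoffSum T (fun y => g y - b) n x| := by
  rcases Nat.eq_zero_or_pos n with rfl | hn
  · simp
  have hn' : (0 : ℝ) < n := by exact_mod_cast hn
  have hf : n * ε ≤ |birkhoffSum T f n x - n * a| := by
    rwa [show (n : ℝ)⁻¹ * birkhoffSum T f n x - a = (n : ℝ)⁻¹ * (birkhoffSum T f n x - n * a) by
      field_simp, abs_mul, abs_inv, Nat.abs_cast, inv_mul_eq_div, le_div_iff₀ hn', mul_comm] at hε
  have hfg_sum : |birkhoffSum T f n x - birkhoffSum T g n x| ≤ n * η := by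
    rw [← birkhoffSum_sub]; exact abs_birkhoffSum_le hT hfg hx n
  have hab' : |(n : ℝ) * (a - b)| ≤ n * η := by rw [abs_mul, Nat.abs_cast]; gcongr
  have htri : |birkhoffSum T f n x - n * a| ≤ |birkhoffSum T g n x - n * b| +
      |birkhoffSum T f n x - birkhoffSum T g n x| + |(n : ℝ) * (a - b)| := by
    calc _ = |(birkhoffSum T g n x - n * b) + (birkhoffSum T f n x - birkhoffSum T g n x) -
          n * (a - b)| := by ring_nf
      _ ≤ _ := (abs_sub _ _).trans (add_le_add_left (abs_add_le _ _) _)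
  rw [birkhoffSum_sub_const]
  linarith

end Birkhoff

section MeanErgodic
variable {α : Type*} [MeasurableSpace α] {μ : Measure α} {T : α → α}

theorem MeasureTheory.MeasurePreserving.coeFn_birkhoffAverage_compMeasurePreserving
    (hT : MeasurePreserving T μ μ) {p : ℝ≥0∞} [Fact (1 ≤ p)] (G : Lp ℝ p μ) (n : ℕ) :
    ⇑(birkhoffAverage ℝ (Lp.compMeasurePreservingₗᵢ ℝ T hT) id n G) =ᵐ[μ]
      birkhoffAverage ℝ T G n := by
  have hiter : ∀ k, ((Lp.compMeasurePreservingₗᵢ ℝ T hT)^[k] G : α → ℝ) =ᵐ[μ] G ∘ T^[k] := by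
    intro k
    have : ⇑(Lp.compMeasurePreservingₗᵢ ℝ T hT) =
        Lp.compMeasurePreserving (E := ℝ) (p := p) T hT := rfl
    rw [this, Lp.compMeasurePreserving_iterate hT k]
    exact Lp.coeFn_compMeasurePreserving G (hT.iterate k)
  have hsum : ∀ n, ⇑(birkhoffSum (Lp.compMeasurePreservingₗᵢ ℝ T hT) id n G) =ᵐ[μ]
      birkhoffSum T G n := by
    intro n
    induction n with
    | zero => simpa [birkhoffSum] using Lp.coeFn_zero ℝ p μ
    | succ n ih =>
      rw [birkhoffSum_succ]
      filter_upwards [Lp.coeFn_add (birkhoffSum (Lp.compMeasurePreservingₗᵢ ℝ T hT) id n G)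
        ((Lp.compMeasurePreservingₗᵢ ℝ T hT)^[n] G), ih, hiter n] with x h1 h2 h3
      simp only [h1, Pi.add_apply, h2, h3, id, birkhoffSum_succ, Function.comp_apply]
  filter_upwards [Lp.coeFn_smul (n : ℝ)⁻¹ (birkhoffSum (Lp.compMeasurePreservingₗᵢ ℝ T hT) id n G),
    hsum n] with x h1 h2
  simp only [birkhoffAverage, h1, Pi.smul_apply, h2]

theorem Ergodic.tendstoInMeasure_birkhoffAverage [IsProbabilityMeasure μ] (hT : Ergodic T μ)
    {g : α → ℝ} (hg : MemLp g 2 μ) :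
    TendstoInMeasure μ (birkhoffAverage ℝ T g) atTop (fun _ => ∫ x, g x ∂μ) := by
  set κ : Lp ℝ 2 μ →L[ℝ] Lp ℝ 2 μ :=
    (Lp.compMeasurePreservingₗᵢ ℝ T hT.toMeasurePreserving).toContinuousLinearMap
  set K := κ.eqLocus (1 : Lp ℝ 2 μ →L[ℝ] Lp ℝ 2 μ)
  set G := hg.toLp g
  set P : Lp ℝ 2 μ := (K.orthogonalProjectionOnto G : Lp ℝ 2 μ)
  have hlim : TendstoInMeasure μ (fun n => ⇑(birkhoffAverage ℝ κ id n G)) atTop P :=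
    tendstoInMeasure_of_tendsto_Lp <| κ.tendsto_birkhoffAverage_orthogonalProjection
      (LinearIsometry.norm_toContinuousLinearMap_le _) G
  have hPfix : ⇑P ∘ T =ᵐ[μ] P := by
    have hκP : Lp.compMeasurePreserving T hT.toMeasurePreserving P = P :=
      LinearMap.mem_eqLocus.1 (K.orthogonalProjectionOnto G).2
    have := Lp.coeFn_compMeasurePreserving P hT.toMeasurePreserving
    rw [hκP] at this
    exact this.symm
  obtain ⟨c, hc⟩ := hT.ae_eq_const_of_ae_eq_comp_ae (Lp.aestronglyMeasurable P) hPfix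
  set one := indicatorConstLp 2 MeasurableSet.univ (measure_ne_top μ _) (1 : ℝ)
  have hone : one ∈ K := LinearMap.mem_eqLocus.2 rfl
  have hc_eq : c = ∫ x, g x ∂μ := by
    have horth : inner ℝ one (G - P) = 0 := by
      rw [real_inner_comm]; exact K.starProjection_inner_eq_zero G one hone
    rw [L2.inner_indicatorConstLp_one, setIntegral_univ,
      integral_congr_ae (Lp.coeFn_sub G P), Pi.sub_def,
      integral_sub (MemLp.integrable one_le_two (Lp.memLp G))
        (MemLp.integrable one_le_two (Lp.memLp P)),
      integral_congr_ae hc, integral_congr_ae hg.coeFn_toLp] at horth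
    simp only [Function.const_apply, integral_const, probReal_univ, smul_eq_mul, one_mul] at horth
    linarith
  refine hlim.congr (fun n => ?_) (hc.trans (by rw [hc_eq]; rfl))
  exact (hT.toMeasurePreserving.coeFn_birkhoffAverage_compMeasurePreserving G n).trans
    (hT.toMeasurePreserving.quasiMeasurePreserving.birkhoffAverage_ae_eq_of_ae_eq ℝ
      hg.coeFn_toLp n)

theorem Ergodic.eventually_measure_le_abs_birkhoffAverage_lt [IsProbabilityMeasure μ]
    (hT : Ergodic T μ) {g : α → ℝ} (hg : MemLp g 2 μ) (hint : ∫ x, g x ∂μ = 0) {η : ℝ}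
    (hη : 0 < η) {δ : ℝ≥0∞} (hδ : 0 < δ) :
    ∀ᶠ n in atTop, μ {x | η ≤ |birkhoffAverage ℝ T g n x|} < δ := by
  have := tendstoInMeasure_iff_norm.1 (hT.tendstoInMeasure_birkhoffAverage hg) η hη
  simp only [hint, sub_zero, Real.norm_eq_abs] at this
  exact this.eventually (gt_mem_nhds hδ)

end MeanErgodic

theorem Finset.exists_mem_powersetCard_two_mul_add_mem {s : Finset ℕ} {q k : ℕ}
    (hs : s ⊆ Finset.range q) (hk : k ≤ s.card) :
    ∃ r < 2, ∃ t ∈ (Finset.range q).powersetCard ((k + 1) / 2), ∀ j ∈ t, 2 * j + r ∈ s := by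
  set parity : ℕ → Finset ℕ := fun r => (Finset.range q).filter (2 * · + r ∈ s)
  have hcard : s.card ≤ (parity 0).card + (parity 1).card := by
    calc _ ≤ ((parity 0).image (2 * ·) ∪ (parity 1).image (2 * · + 1)).card := by
          refine Finset.card_le_card fun i hi => ?_
          have hiq := Finset.mem_range.1 (hs hi)
          obtain ⟨j, rfl | rfl⟩ := Nat.even_or_odd' i
          · exact Finset.mem_union_left _ <| Finset.mem_image.2
              ⟨j, Finset.mem_filter.2 ⟨Finset.mem_range.2 (by omega), hi⟩, rfl⟩
          · exact Finset.mem_union_right _ <| Finset.mem_image.2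
              ⟨j, Finset.mem_filter.2 ⟨Finset.mem_range.2 (by omega), hi⟩, rfl⟩
      _ ≤ _ := (Finset.card_union_le _ _).trans
          (add_le_add Finset.card_image_le Finset.card_image_le)
  obtain ⟨r, hr, hrk⟩ : ∃ r < 2, (k + 1) / 2 ≤ (parity r).card := by
    by_cases h : (k + 1) / 2 ≤ (parity 0).card
    · exact ⟨0, two_pos, h⟩
    · exact ⟨1, one_lt_two, by omega⟩
  obtain ⟨t, hts, htk⟩ := Finset.exists_subset_card_eq hrk
  exact ⟨r, hr, t, Finset.mem_powersetCard.2 ⟨hts.trans (Finset.filter_subset _ _), htk⟩,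
    fun j hj => (Finset.mem_filter.1 (hts hj)).2⟩

theorem measure_setOf_le_card_filter_le {α : Type*} [MeasurableSpace α] (μ : Measure α)
    {X : ℕ → Set α} {ρ : ℝ≥0∞}
    (hX : ∀ r < 2, ∀ t : Finset ℕ, μ (⋂ j ∈ t, X (2 * j + r)) ≤ ρ ^ t.card) (q k : ℕ) :
    μ {x | k ≤ ((Finset.range q).filter (x ∈ X ·)).card} ≤ 2 * 2 ^ q * ρ ^ ((k + 1) / 2) := by
  have hsub : {x | k ≤ ((Finset.range q).filter (x ∈ X ·)).card} ⊆
      ⋃ r ∈ Finset.range 2, ⋃ t ∈ (Finset.range q).powersetCard ((k + 1) / 2),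
        ⋂ j ∈ t, X (2 * j + r) := fun x hx => by
    obtain ⟨r, hr, t, ht, hts⟩ :=
      Finset.exists_mem_powersetCard_two_mul_add_mem (Finset.filter_subset _ _) hx
    simp only [mem_iUnion, mem_iInter]
    exact ⟨r, Finset.mem_range.2 hr, t, ht, fun j hj => (Finset.mem_filter.1 (hts j hj)).2⟩
  calc _ ≤ ∑ r ∈ Finset.range 2, ∑ t ∈ (Finset.range q).powersetCard ((k + 1) / 2),
        μ (⋂ j ∈ t, X (2 * j + r)) :=
      (measure_mono hsub).trans <| (measure_biUnion_finset_le _ _).trans <|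
        Finset.sum_le_sum fun r _ => measure_biUnion_finset_le _ _
    _ ≤ ∑ _r ∈ Finset.range 2, ∑ _t ∈ (Finset.range q).powersetCard ((k + 1) / 2),
        ρ ^ ((k + 1) / 2) := by
      refine Finset.sum_le_sum fun r hr => Finset.sum_le_sum fun t ht => ?_
      rw [← (Finset.mem_powersetCard.1 ht).2]
      exact hX r (Finset.mem_range.1 hr) t
    _ = 2 * q.choose ((k + 1) / 2) * ρ ^ ((k + 1) / 2) := by
      simp only [Finset.sum_const, Finset.card_range, Finset.card_powersetCard, nsmul_eq_mul,
        Nat.cast_ofNat, mul_assoc]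
    _ ≤ 2 * 2 ^ q * ρ ^ ((k + 1) / 2) := by
      gcongr
      exact_mod_cast Nat.choose_le_two_pow q _

theorem two_pow_mul_exp_pow_le {θ : ℝ} (hθ : 0 < θ) {q k : ℕ} (hk : θ * q ≤ k) :
    2 ^ q * Real.exp (-(1 + Real.log 2) / θ) ^ k ≤ Real.exp (-q) := by
  rw [← Real.exp_log (two_pos : (0 : ℝ) < 2), ← Real.exp_nat_mul, ← Real.exp_nat_mul,
    ← Real.exp_add, Real.exp_log two_pos, Real.exp_le_exp]
  have h1 : (q : ℝ) * (1 + Real.log 2) ≤ k * ((1 + Real.log 2) / θ) := by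
    rw [mul_div_assoc', le_div_iff₀ hθ]
    nlinarith [Real.log_nonneg one_le_two]
  rw [neg_div]
  nlinarith

theorem two_mul_two_pow_mul_ofReal_pow_le {θ : ℝ} (hθ : 0 < θ) {L n k : ℕ} (hL : 0 < L)
    (hk : 2 * θ * (n / L : ℕ) ≤ k) :
    2 * 2 ^ (n / L) * ENNReal.ofReal (Real.exp (-(1 + Real.log 2) / θ)) ^ ((k + 1) / 2) ≤
      ENNReal.ofReal (2 * Real.exp 1 * Real.exp (-(1 / L) * n)) := by
  set q := n / L
  have hkq : θ * q ≤ ((k + 1) / 2 : ℕ) := by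
    have : (k : ℝ) ≤ 2 * ((k + 1) / 2 : ℕ) := by exact_mod_cast (by omega : k ≤ 2 * ((k + 1) / 2))
    linarith
  have hnq : (n : ℝ) / L ≤ q + 1 := by
    rw [div_le_iff₀ (by positivity)]
    have : n ≤ q * L + L := (Nat.lt_div_mul_add hL).le
    push_cast [add_mul, one_mul]
    exact_mod_cast this
  rw [← ENNReal.ofReal_pow (Real.exp_pos _).le, ← ENNReal.ofReal_ofNat 2,
    ← ENNReal.ofReal_pow zero_le_two, ← ENNReal.ofReal_mul zero_le_two,
    ← ENNReal.ofReal_mul (by positivity), mul_assoc 2, mul_assoc 2]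
  refine ENNReal.ofReal_le_ofReal (mul_le_mul_of_nonneg_left ?_ zero_le_two)
  refine (two_pow_mul_exp_pow_le hθ hkq).trans ?_
  rw [← Real.exp_add]
  gcongr
  linarith [show -(1 / (L : ℝ)) * n = -(n / L) by ring]

theorem exists_forall_lt_ofReal_mul_exp {p : ℕ → ℝ≥0∞} (hp : ∀ n, p n ≤ 1) {K c : ℝ}
    (hc : 0 ≤ c) (h : ∀ᶠ n in atTop, p n ≤ ENNReal.ofReal (K * Real.exp (-c * n))) :
    ∃ C > 0, ∀ n, p n < ENNReal.ofReal (C * Real.exp (-c * n)) := by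
  obtain ⟨n₀, hn₀⟩ := eventually_atTop.1 h
  refine ⟨(|K| + 2) * Real.exp (c * n₀), by positivity, fun n => ?_⟩
  rcases le_or_gt n₀ n with hn | hn
  · refine (hn₀ n hn).trans_lt ((ENNReal.ofReal_lt_ofReal_iff (by positivity)).2 ?_)
    refine mul_lt_mul_of_pos_right ?_ (Real.exp_pos _)
    calc K < |K| + 2 := by linarith [le_abs_self K]
      _ ≤ _ := le_mul_of_one_le_right (by positivity) (Real.one_le_exp (by positivity))
  · refine (hp n).trans_lt ?_
    rw [← ENNReal.ofReal_one, ENNReal.ofReal_lt_ofReal_iff (by positivity), mul_assoc,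
      ← Real.exp_add]
    have : 1 ≤ Real.exp (c * n₀ + -c * n) := Real.one_le_exp (by
      have : (n : ℝ) ≤ n₀ := by exact_mod_cast hn.le
      nlinarith)
    nlinarith [abs_nonneg K]

theorem abs_integral_sub_le_of_ae {α : Type*} [MeasurableSpace α] {μ : Measure α}
    [IsProbabilityMeasure μ] {F G : α → ℝ} (hF : AEStronglyMeasurable F μ) (hG : Integrable G μ)
    {η : ℝ} (h : ∀ᵐ x ∂μ, |F x - G x| ≤ η) : |∫ x, F x ∂μ - ∫ x, G x ∂μ| ≤ η := by
  have hFG : Integrable (F - G) μ := Integrable.of_bound (hF.sub hG.1) η h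
  rw [← integral_sub (by simpa using hFG.add hG) hG]
  simpa using norm_integral_le_of_norm_le_const (μ := μ) (f := fun x => F x - G x) h

section ShiftSpace

variable {A : Type*}

theorem shift_iterate_apply (k : ℕ) (ω : ℤ → A) (n : ℤ) : shift^[k] ω n = ω (n + k) := by
  induction k generalizing ω with
  | zero => simp
  | succ k ih =>
    rw [Function.iterate_succ_apply, ih]
    simp only [shift, Nat.cast_succ, add_assoc]

theorem DependsOn.comp_shift_iterate {β : Type*} {F : (ℤ → A) → β} {s : Set ℤ}
    (hF : DependsOn F s) (k : ℕ) : DependsOn (F ∘ shift^[k]) ((· + (k : ℤ)) '' s) :=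
  fun _ _ h => hF fun i hi => by
    simp only [shift_iterate_apply]; exact h _ (mem_image_of_mem _ hi)

theorem DependsOn.birkhoffAverage_shift {F : (ℤ → A) → ℝ} {a b : ℤ} (hF : DependsOn F (Ico a b))
    (n : ℕ) : DependsOn (birkhoffAverage ℝ shift F n) (Ico a (b + n)) := fun x y h => by
  refine congrArg (_ • ·) <| Finset.sum_congr rfl fun k hk =>
    hF.comp_shift_iterate k fun i hi => h i ?_
  obtain ⟨j, ⟨hj₁, hj₂⟩, rfl⟩ := hi
  have := Finset.mem_range.1 hk
  change a ≤ j + k ∧ j + k < b + n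
  omega

theorem dependsOn_mem_biInter {ι : Type*} {S : ι → Set (ℤ → A)} {s : Set ℤ} {t : Finset ι}
    (h : ∀ i ∈ t, DependsOn (· ∈ S i) s) : DependsOn (· ∈ ⋂ i ∈ t, S i) s := fun x y hxy => by
  simp only [mem_iInter]
  exact propext <| forall₂_congr fun i hi => Iff.of_eq (h i hi hxy)

theorem mem_cylinder_ofFn {n : ℤ} {N : ℕ} {w : Fin N → A} {ω : ℤ → A} :
    ω ∈ cylinder n (List.ofFn w) ↔ ∀ i : Fin N, ω (n + i) = w i := by
  simp [_root_.cylinder, Fin.forall_iff]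

theorem cylinder_nil (n : ℤ) : cylinder n ([] : List A) = univ := by
  simp [_root_.cylinder]

theorem shiftDist_nonneg (ω ω' : ℤ → A) : 0 ≤ shiftDist ω ω' := by
  unfold shiftDist
  split_ifs
  exacts [le_rfl, (Real.exp_pos _).le]

theorem shiftDist_le_exp_neg {ω ω' : ℤ → A} {m : ℕ} (h : ∀ n : ℤ, |n| < m → ω n = ω' n) :
    shiftDist ω ω' ≤ Real.exp (-m) := by
  unfold shiftDist
  split_ifs with hωω'
  · exact (Real.exp_pos _).le
  obtain ⟨n₀, hn₀⟩ := Function.ne_iff.1 hωω'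
  have hbdd : BddAbove {N : ℕ | ∀ n : ℤ, |n| < (N : ℤ) → ω n = ω' n} :=
    ⟨n₀.natAbs, fun N hN => by
      by_contra hlt
      exact hn₀ (hN n₀ (by rw [Int.abs_eq_natAbs]; omega))⟩
  gcongr
  exact_mod_cast le_csSup hbdd h

variable [MeasurableSpace A]

/-- The upper bound of the bounded distortion property, for non-overlapping cylinders (empty words
included). -/
def CylinderUpperDistortion (μ : Measure (ℤ → A)) (C₀ : ℝ≥0) : Prop :=
  ∀ (n l : ℤ) (u v : List A), n + u.length ≤ l →
    μ (cylinder n u ∩ cylinder l v) ≤ C₀ * (μ (cylinder n u) * μ (cylinder l v))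

theorem CylinderUpperDistortion.of_forall_nonempty {μ : Measure (ℤ → A)} [IsProbabilityMeasure μ]
    {C₀ : ℝ≥0} {Ω : Set (ℤ → A)} (hΩ : μ Ωᶜ = 0) (hC₀ : 1 ≤ C₀)
    (hbd : ∀ (n l : ℤ) (u v : List A), u ≠ [] → v ≠ [] → n + (u.length : ℤ) - 1 < l →
      (cylinder n u ∩ cylinder l v ∩ Ω).Nonempty →
      μ (cylinder n u ∩ cylinder l v) ≤ C₀ * (μ (cylinder n u) * μ (cylinder l v))) :
    CylinderUpperDistortion μ C₀ := by
  have hC₀' : (1 : ℝ≥0∞) ≤ C₀ := by exact_mod_cast hC₀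
  intro n l u v hnl
  rcases eq_or_ne u [] with rfl | hu
  · simpa [cylinder_nil] using le_mul_of_one_le_left' hC₀'
  rcases eq_or_ne v [] with rfl | hv
  · simpa [cylinder_nil] using le_mul_of_one_le_left' hC₀'
  by_cases hne : (cylinder n u ∩ cylinder l v ∩ Ω).Nonempty
  · exact hbd n l u v hu hv (by omega) hne
  · refine (measure_mono_null (fun ω hω => ?_) hΩ).trans_le zero_le
    exact fun hωΩ => hne ⟨ω, hω, hωΩ⟩

variable [MeasurableSingletonClass A]

theorem exists_dependsOn_eq_apply_of_agree [Finite A] (Ω : Set (ℤ → A)) (f : (ℤ → A) → ℝ)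
    (s : Finset ℤ) :
    ∃ g : (ℤ → A) → ℝ, Measurable g ∧ DependsOn g s ∧ (∃ B, ∀ x, |g x| ≤ B) ∧
      ∀ ω ∈ Ω, ∃ ω' ∈ Ω, (∀ i ∈ s, ω' i = ω i) ∧ g ω = f ω' := by
  set F : ((i : s) → A) → ℝ := fun w =>
    if h : ∃ ω' ∈ Ω, s.restrict ω' = w then f h.choose else 0
  obtain ⟨B, hB⟩ := (Set.finite_range fun w => |F w|).bddAbove
  refine ⟨F ∘ s.restrict, (measurable_of_countable F).comp (Finset.measurable_restrict s),
    fun x y h => congrArg F (funext fun i => h i i.2), ⟨B, fun x => hB ⟨_, rfl⟩⟩,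
    fun ω hω => ?_⟩
  have h : ∃ ω' ∈ Ω, s.restrict ω' = s.restrict ω := ⟨ω, hω, rfl⟩
  refine ⟨h.choose, h.choose_spec.1, fun i hi => congrFun h.choose_spec.2 ⟨i, hi⟩, ?_⟩
  simp only [Function.comp_apply, F, dif_pos h]

theorem exists_dependsOn_abs_sub_le [Finite A] {Ω : Set (ℤ → A)} {f : (ℤ → A) → ℝ} {α Cf : ℝ}
    (hα : 0 < α) (hCf : 0 ≤ Cf)
    (hf : ∀ ω ∈ Ω, ∀ ω' ∈ Ω, |f ω - f ω'| ≤ Cf * shiftDist ω ω' ^ α) {η : ℝ} (hη : 0 < η) :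
    ∃ m : ℕ, ∃ g : (ℤ → A) → ℝ, Measurable g ∧ DependsOn g (Ico (-m : ℤ) m) ∧
      (∃ B, ∀ x, |g x| ≤ B) ∧ ∀ ω ∈ Ω, |f ω - g ω| ≤ η := by
  have hlim : Tendsto (fun m : ℕ => Cf * Real.exp (-m) ^ α) atTop (𝓝 0) := by
    have := ((Real.tendsto_exp_neg_atTop_nhds_zero.comp tendsto_natCast_atTop_atTop).rpow_const
      (Or.inr hα.le)).const_mul Cf
    simpa [Real.zero_rpow hα.ne'] using this
  obtain ⟨m, hm⟩ := (hlim.eventually (ge_mem_nhds hη)).exists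
  obtain ⟨g, hgm, hgdep, hgB, hg⟩ := exists_dependsOn_eq_apply_of_agree Ω f (Finset.Ico (-m : ℤ) m)
  refine ⟨m, g, hgm, by simpa using hgdep, hgB, fun ω hω => ?_⟩
  obtain ⟨ω', hω'Ω, hagree, hgω⟩ := hg ω hω
  calc |f ω - g ω| ≤ Cf * shiftDist ω ω' ^ α := hgω ▸ hf ω hω ω' hω'Ω
    _ ≤ Cf * Real.exp (-m) ^ α := by
      gcongr
      · exact shiftDist_nonneg ω ω'
      refine shiftDist_le_exp_neg fun n hn => (hagree n ?_).symm
      rw [Finset.mem_Ico]; constructor <;> linarith [neg_abs_le n, le_abs_self n]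
    _ ≤ η := hm

theorem measurableSet_cylinder (n : ℤ) (w : List A) : MeasurableSet (cylinder n w) := by
  simp only [_root_.cylinder, ofPred_forall]
  exact MeasurableSet.iInter fun i => measurable_pi_apply _ (measurableSet_singleton _)

theorem measure_inter_eq_sum_cylinder [Fintype A] (μ : Measure (ℤ → A)) {S X : Set (ℤ → A)}
    {a : ℤ} {N : ℕ} (hS : DependsOn (· ∈ S) (Ico a (a + N))) (hX : MeasurableSet X) :
    μ (S ∩ X) = ∑ w : Fin N → A with cylinder a (List.ofFn w) ⊆ S,
      μ (cylinder a (List.ofFn w) ∩ X) := by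
  rw [← measure_biUnion_finset _ fun w _ => (measurableSet_cylinder _ _).inter hX]
  · congr 1
    ext ω
    simp only [mem_inter_iff, mem_iUnion, Finset.mem_filter, Finset.mem_univ, true_and,
      exists_prop]
    refine ⟨fun ⟨hωS, hωX⟩ => ⟨fun i => ω (a + i), ?_, mem_cylinder_ofFn.2 fun i => rfl, hωX⟩,
      fun ⟨w, hw, hωw, hωX⟩ => ⟨hw hωw, hωX⟩⟩
    intro ω' hω'
    refine cast (hS fun i hi => ?_) hωS
    obtain ⟨j, hj, rfl⟩ : ∃ j : ℕ, j < N ∧ a + j = i := ⟨(i - a).toNat, by grind, by grind⟩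
    exact (mem_cylinder_ofFn.1 hω' ⟨j, hj⟩).symm
  · intro w _ v _ hwv
    refine Disjoint.mono inter_subset_left inter_subset_left (disjoint_left.2 fun ω hw hv => hwv ?_)
    funext i
    rw [← mem_cylinder_ofFn.1 hw i, ← mem_cylinder_ofFn.1 hv i]

namespace CylinderUpperDistortion

variable {μ : Measure (ℤ → A)} {C₀ : ℝ≥0}

variable [Fintype A]

theorem measure_inter_le (hμ : CylinderUpperDistortion μ C₀) {S T : Set (ℤ → A)} {a l : ℤ}
    {N M : ℕ} (hS : DependsOn (· ∈ S) (Ico a (a + N))) (hT : DependsOn (· ∈ T) (Ico l (l + M)))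
    (hTm : MeasurableSet T) (hal : a + N ≤ l) : μ (S ∩ T) ≤ C₀ * (μ S * μ T) := by
  have hsum : ∀ {X : Set (ℤ → A)} {b : ℤ} {K : ℕ}, DependsOn (· ∈ X) (Ico b (b + K)) →
      μ X = ∑ w : Fin K → A with cylinder b (List.ofFn w) ⊆ X, μ (cylinder b (List.ofFn w)) :=
    fun hX => by simpa using measure_inter_eq_sum_cylinder μ hX MeasurableSet.univ
  have hcyl : ∀ w : Fin N → A, μ (cylinder a (List.ofFn w) ∩ T) ≤
      C₀ * (μ (cylinder a (List.ofFn w)) * μ T) := fun w => by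
    rw [inter_comm, measure_inter_eq_sum_cylinder μ hT (measurableSet_cylinder _ _), hsum hT,
      Finset.mul_sum, Finset.mul_sum]
    refine Finset.sum_le_sum fun v _ => ?_
    rw [inter_comm]
    exact hμ a l _ _ (by simpa using hal)
  calc μ (S ∩ T) = ∑ w : Fin N → A with cylinder a (List.ofFn w) ⊆ S,
        μ (cylinder a (List.ofFn w) ∩ T) := measure_inter_eq_sum_cylinder μ hS hTm
    _ ≤ ∑ w : Fin N → A with cylinder a (List.ofFn w) ⊆ S,
        C₀ * (μ (cylinder a (List.ofFn w)) * μ T) := Finset.sum_le_sum fun w _ => hcyl w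
    _ = C₀ * (μ S * μ T) := by
      rw [← Finset.mul_sum, ← Finset.sum_mul, ← hsum hS]

theorem measure_biInter_preimage_le [IsProbabilityMeasure μ] (hμ : CylinderUpperDistortion μ C₀)
    (hshift : MeasurePreserving shift μ μ) {S : Set (ℤ → A)} (hSm : MeasurableSet S) {a : ℤ}
    {N P : ℕ} (hS : DependsOn (· ∈ S) (Ico a (a + N))) (hNP : N ≤ P) (t : Finset ℕ) :
    μ (⋂ j ∈ t, shift^[j * P] ⁻¹' S) ≤ (C₀ * μ S) ^ t.card := by
  induction t using Finset.induction_on_max with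
  | empty => simp
  | insert M t hlt ih =>
    have hdep : ∀ j, DependsOn (· ∈ shift^[j * P] ⁻¹' S)
        (Ico (a + (j * P : ℕ)) (a + (j * P : ℕ) + N)) := by
      intro j
      have := hS.comp_shift_iterate (j * P)
      rwa [image_add_const_Ico, add_right_comm] at this
    have hpast : DependsOn (· ∈ ⋂ j ∈ t, shift^[j * P] ⁻¹' S) (Ico a (a + (M * P : ℕ))) :=
      dependsOn_mem_biInter fun j hj => (hdep j).mono <| Ico_subset_Ico (by omega) <| by
        have : j * P + N ≤ M * P := by nlinarith [hlt j hj]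
        push_cast at this ⊢; omega
    rw [Finset.set_biInter_insert, inter_comm,
      Finset.card_insert_of_notMem fun h => (hlt M h).false, pow_succ]
    calc _ ≤ C₀ * (μ (⋂ j ∈ t, shift^[j * P] ⁻¹' S) * μ (shift^[M * P] ⁻¹' S)) :=
          hμ.measure_inter_le hpast (hdep M) (hSm.preimage (hshift.iterate _).measurable) le_rfl
      _ ≤ C₀ * ((C₀ * μ S) ^ t.card * μ S) := by
          rw [(hshift.iterate _).measure_preimage hSm.nullMeasurableSet]; gcongr
      _ = _ := by ring

theorem measure_biInter_preimage_two_mul_add_le [IsProbabilityMeasure μ]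
    (hμ : CylinderUpperDistortion μ C₀)
    (hshift : MeasurePreserving shift μ μ) {S : Set (ℤ → A)} (hSm : MeasurableSet S) {a : ℤ}
    {N L : ℕ} (hS : DependsOn (· ∈ S) (Ico a (a + N))) (hNL : N ≤ 2 * L) (r : ℕ)
    (t : Finset ℕ) : μ (⋂ j ∈ t, shift^[(2 * j + r) * L] ⁻¹' S) ≤ (C₀ * μ S) ^ t.card := by
  have hblock : ∀ j,
      shift^[(2 * j + r) * L] ⁻¹' S = shift^[j * (2 * L)] ⁻¹' (shift^[r * L] ⁻¹' S) := by
    intro j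
    rw [← preimage_comp, ← Function.iterate_add]
    congr 2
    ring
  have hSr : DependsOn (· ∈ shift^[r * L] ⁻¹' S) (Ico (a + (r * L : ℕ)) (a + (r * L : ℕ) + N)) := by
    have := hS.comp_shift_iterate (r * L)
    rwa [image_add_const_Ico, add_right_comm] at this
  simp only [hblock]
  rw [← (hshift.iterate (r * L)).measure_preimage hSm.nullMeasurableSet]
  exact hμ.measure_biInter_preimage_le hshift (hSm.preimage (hshift.iterate _).measurable) hSr hNL t

theorem exists_eventually_measure_birkhoffSum_le_exp [IsProbabilityMeasure μ]
    (hμ : CylinderUpperDistortion μ C₀)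
    (herg : Ergodic shift μ) {h : (ℤ → A) → ℝ} (hm : Measurable h) {a b : ℤ}
    (hdep : DependsOn h (Ico a b)) {B : ℝ} (hB : ∀ x, |h x| ≤ B) (hint : ∫ x, h x ∂μ = 0)
    {β : ℝ} (hβ : 0 < β) :
    ∃ K c : ℝ, 0 < c ∧ ∀ᶠ n : ℕ in atTop,
      μ {x | n * β ≤ |birkhoffSum shift h n x|} ≤ ENNReal.ofReal (K * Real.exp (-c * n)) := by
  obtain ⟨B, hB0, hB⟩ : ∃ B' > 0, ∀ x, |h x| ≤ B' :=
    ⟨max B 1, by positivity, fun x => (hB x).trans (le_max_left _ _)⟩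
  set θ := β / (4 * B)
  -- `2 ^ q * D ^ (θ * q) = exp (-q)`, which beats the number of ways to choose the bad blocks
  set D := Real.exp (-(1 + Real.log 2) / θ)
  set Bad : ℕ → Set (ℤ → A) := fun L => {x | β / 4 ≤ |birkhoffAverage ℝ shift h L x|}
  obtain ⟨L, hL, hLbad⟩ := ((eventually_ge_atTop (max 1 (b - a).toNat)).and
    (herg.eventually_measure_le_abs_birkhoffAverage_lt
      (MemLp.of_bound hm.aestronglyMeasurable B (ae_of_all _ hB)) hint (by positivity : 0 < β / 4)
      (ENNReal.div_pos (ENNReal.ofReal_pos.2 (Real.exp_pos _)).ne' ENNReal.coe_ne_top :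
        0 < ENNReal.ofReal D / C₀))).exists
  have hL0 : 0 < L := by omega
  have hBadm : MeasurableSet (Bad L) := measurableSet_le measurable_const
    (measurable_birkhoffAverage herg.toMeasurePreserving.measurable hm L).abs
  have hBaddep : DependsOn (· ∈ Bad L) (Ico a (a + ((b - a).toNat + L : ℕ))) := fun x y hxy =>
    congrArg (β / 4 ≤ |·|) <| (hdep.birkhoffAverage_shift L).mono
      (Ico_subset_Ico_right (by push_cast; omega)) hxy
  -- blocks of the same parity are `2 * L` apart, and each bad event sees only `L + (b - a)` sites
  have hX : ∀ r < 2, ∀ t : Finset ℕ, μ (⋂ j ∈ t, shift^[(2 * j + r) * L] ⁻¹' Bad L) ≤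
      ENNReal.ofReal D ^ t.card := fun r _ t => by
    refine (hμ.measure_biInter_preimage_two_mul_add_le herg.toMeasurePreserving hBadm hBaddep
      (by omega) r t).trans (pow_le_pow_left₀ zero_le ?_ _)
    calc (C₀ : ℝ≥0∞) * μ (Bad L) ≤ C₀ * (ENNReal.ofReal D / C₀) := by gcongr
      _ ≤ ENNReal.ofReal D := ENNReal.mul_div_le
  refine ⟨2 * Real.exp 1, 1 / L, by positivity, ?_⟩
  filter_upwards [eventually_ge_atTop ⌈4 * (L * B) / β⌉₊] with n hn
  have hsub : {x | n * β ≤ |birkhoffSum shift h n x|} ⊆ {x | ⌈2 * θ * (n / L : ℕ)⌉₊ ≤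
      ((Finset.range (n / L)).filter (x ∈ shift^[· * L] ⁻¹' Bad L)).card} := fun x hx => by
    have hbad := mul_le_card_filter_of_le_abs_birkhoffSum hB hβ hL0
      ((div_le_iff₀ hβ).1 (Nat.ceil_le.1 hn)) hx
    rw [mem_ofPred_eq, Nat.ceil_le, show 2 * θ * (n / L : ℕ) = (n / L : ℕ) * β / (2 * B) by ring,
      div_le_iff₀ (by positivity), mul_comm _ (2 * B)]
    exact hbad
  exact (measure_mono hsub).trans <| (measure_setOf_le_card_filter_le μ hX _ _).trans <|
    two_mul_two_pow_mul_ofReal_pow_le (by positivity) hL0 (Nat.le_ceil _)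

end CylinderUpperDistortion

end ShiftSpace

end

theorem large_deviation_estimate_general
    {A : Type*} [Fintype A] [TopologicalSpace A] [DiscreteTopology A]
    [MeasurableSpace A] [MeasurableSingletonClass A]
    (Ω : Set (ℤ → A)) (hclosed : IsClosed Ω) (hΩinv : ∀ ω, ω ∈ Ω ↔ shift ω ∈ Ω)
    (μ : Measure (ℤ → A)) [IsProbabilityMeasure μ]
    (hsupp : μ Ω = 1)
    (herg : Ergodic (shift (A := A)) μ)
    (C₀ : ℝ≥0) (hC₀ : 1 ≤ C₀)
    (hbd : ∀ (n l : ℤ) (u v : List A), u ≠ [] → v ≠ [] →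
      n + (u.length : ℤ) - 1 < l →
      (cylinder n u ∩ cylinder l v ∩ Ω).Nonempty →
      μ (cylinder n u) * μ (cylinder l v) ≤ C₀ * μ (cylinder n u ∩ cylinder l v) ∧
      μ (cylinder n u ∩ cylinder l v) ≤ C₀ * (μ (cylinder n u) * μ (cylinder l v)))
    (f : (ℤ → A) → ℝ) (hfmeas : Measurable f)
    (α Cf : ℝ) (hα : 0 < α) (hCf : 0 < Cf)
    (hf : ∀ ω ∈ Ω, ∀ ω' ∈ Ω, |f ω - f ω'| ≤ Cf * shiftDist ω ω' ^ α) :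
    ∀ ε > 0, ∃ C > 0, ∃ c > 0, ∀ n : ℕ, 1 ≤ n →
      μ {ω | ω ∈ Ω ∧
          ε ≤ |(n : ℝ)⁻¹ * (∑ k ∈ Finset.range n, f (shift^[k] ω)) - ∫ x, f x ∂μ|}
        < ENNReal.ofReal (C * Real.exp (-c * n)) := by
  have hΩ : μ Ωᶜ = 0 := (prob_compl_eq_zero_iff hclosed.measurableSet).2 hsupp
  have hμ := CylinderUpperDistortion.of_forall_nonempty hΩ hC₀
    fun n l u v hu hv hl hne => (hbd n l u v hu hv hl hne).2
  intro ε hε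
  obtain ⟨m, g, hgm, hgdep, ⟨B, hB⟩, hfg⟩ :=
    exists_dependsOn_abs_sub_le hα hCf.le hf (by positivity : 0 < ε / 4)
  have hgint : Integrable g μ := Integrable.of_bound hgm.aestronglyMeasurable B (ae_of_all _ hB)
  have hfg_int : |∫ x, f x ∂μ - ∫ x, g x ∂μ| ≤ ε / 4 :=
    abs_integral_sub_le_of_ae hfmeas.aestronglyMeasurable hgint
      ((show ∀ᵐ ω ∂μ, ω ∈ Ω from mem_ae_iff.2 hΩ).mono hfg)
  obtain ⟨K, c, hc, hK⟩ := hμ.exists_eventually_measure_birkhoffSum_le_exp herg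
    (hgm.sub_const (∫ x, g x ∂μ)) (fun x y hxy => congrArg (· - _) (hgdep hxy))
    (fun x => (abs_sub _ _).trans (add_le_add (hB x) le_rfl))
    (by simp [integral_sub hgint (integrable_const _)]) (half_pos hε)
  refine Exists.imp (fun C ⟨hC, hCn⟩ => ⟨hC, c, hc, fun n _ => hCn n⟩) <|
    exists_forall_lt_ofReal_mul_exp (fun n => prob_le_one) hc.le <|
      hK.mono fun n hn => (measure_mono fun ω hω => ?_).trans hn
  obtain ⟨hω, hdev⟩ := hω
  have := mul_le_abs_birkhoffSum_sub_const (fun ω hω => (hΩinv ω).1 hω) hfg hfg_int hω hdev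
  rwa [show ε - 2 * (ε / 4) = ε / 2 by ring] at this

/-- large deviations.  For a topologically mixing subshift of finite type
`Ω`, a `T`-ergodic probability measure `μ` with the bounded distortion property, and an
`α`-Hölder `f`, Birkhoff averages deviate from `∫ f dμ` by `ε` with exponentially small
probability. -/
theorem large_deviation_estimate
    {A : Type*} [Fintype A] [TopologicalSpace A] [DiscreteTopology A]
    [MeasurableSpace A] [MeasurableSingletonClass A]
    (Ω : Set (ℤ → A)) (hclosed : IsClosed Ω) (hΩinv : ∀ ω, ω ∈ Ω ↔ shift ω ∈ Ω)
    (hmix : ∀ U V : Set (ℤ → A), IsOpen U → IsOpen V →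
      (U ∩ Ω).Nonempty → (V ∩ Ω).Nonempty →
      ∃ N : ℕ, ∀ n ≥ N, ((shift^[n] '' (U ∩ Ω)) ∩ (V ∩ Ω)).Nonempty)
    (μ : Measure (ℤ → A)) [IsProbabilityMeasure μ]
    (hsupp : μ Ω = 1)
    (herg : Ergodic (shift (A := A)) μ)
    (C₀ : ℝ≥0) (hC₀ : 1 ≤ C₀)
    (hbd : ∀ (n l : ℤ) (u v : List A), u ≠ [] → v ≠ [] →
      n + (u.length : ℤ) - 1 < l →
      (cylinder n u ∩ cylinder l v ∩ Ω).Nonempty →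
      μ (cylinder n u) * μ (cylinder l v) ≤ C₀ * μ (cylinder n u ∩ cylinder l v) ∧
      μ (cylinder n u ∩ cylinder l v) ≤ C₀ * (μ (cylinder n u) * μ (cylinder l v)))
    (f : (ℤ → A) → ℝ) (hfmeas : Measurable f)
    (α Cf : ℝ) (hα : 0 < α) (hα1 : α ≤ 1) (hCf : 0 < Cf)
    (hf : ∀ ω ∈ Ω, ∀ ω' ∈ Ω, |f ω - f ω'| ≤ Cf * shiftDist ω ω' ^ α) :
    ∀ ε > 0, ∃ C > 0, ∃ c > 0, ∀ n : ℕ, 1 ≤ n →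
      μ {ω | ω ∈ Ω ∧
          ε ≤ |(n : ℝ)⁻¹ * (∑ k ∈ Finset.range n, f (shift^[k] ω)) - ∫ x, f x ∂μ|}
        < ENNReal.ofReal (C * Real.exp (-c * n)) :=
  large_deviation_estimate_general Ω hclosed hΩinv μ hsupp herg C₀ hC₀ hbd f hfmeas α Cf hα hCf hf
end

section
/- Consider the random dimer model: for λ ∈ (-2,2) with λ ≠ 0, potentials V_ω with V_ω(2n) = V_ω(2n+1) = ω_n where ω_n ∈ {0, λ}. At energy E = 0 (and similarly E = λ), the products of transfer matrices A^E_n(ω) are uniformly bounded in n for every ω; consequently the Lyapunov exponent vanishes at E = 0 and E = λ. -/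
open Matrix Filter

attribute [local instance] Matrix.normedAddCommGroup

noncomputable def transferMatrix (V : ℤ → ℝ) (E : ℝ) (j : ℤ) : Matrix (Fin 2) (Fin 2) ℝ :=
  !![E - V j, -1; 1, 0]

/-- The product of transfer matrices over sites `0, …, n−1`. -/
noncomputable def transferProd (V : ℤ → ℝ) (E : ℝ) (n : ℕ) : Matrix (Fin 2) (Fin 2) ℝ :=
  ((List.range n).reverse.map fun m : ℕ => transferMatrix V E (m : ℤ)).prod

/-! Because `E - V` takes only the values `0` and `c = 2E - λ` and is constant on each dimer,
the product over a dimer is `-1` or the fixed matrix `B = dimerBlock c`, which has determinant one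
and trace `c² - 2 = λ² - 2 ∈ (-2, 2)`. Hence every even-length product is `±Bᵏ`, and an elliptic
matrix has bounded powers: writing `tr B = 2 cos θ`, Cayley–Hamilton gives
`sin θ • Bᵏ = sin (kθ) • B - sin ((k - 1)θ) • 1`. Determinant one keeps the norms of the products
away from zero, so `log ‖A_n‖` is bounded and the Lyapunov exponent vanishes. -/

attribute [local instance] Matrix.normedSpace

theorem sin_smul_pow_eq_of_mul_self_eq {A : Type*} [Ring A] [Algebra ℝ A] {M : A} {θ : ℝ}
    (hM : M * M = (2 * Real.cos θ) • M - 1) (k : ℕ) :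
    Real.sin θ • M ^ k = Real.sin (k * θ) • M - Real.sin ((k - 1) * θ) • 1 := by
  induction k with
  | zero => simp [Real.sin_neg]
  | succ k ih =>
    have hsin : Real.sin ((k + 1) * θ)
        = 2 * Real.cos θ * Real.sin (k * θ) - Real.sin ((k - 1) * θ) := by
      rw [add_mul, sub_mul, one_mul, Real.sin_add, Real.sin_sub]
      ring
    calc Real.sin θ • M ^ (k + 1) = M * (Real.sin θ • M ^ k) := by rw [pow_succ', mul_smul_comm]
      _ = Real.sin (k * θ) • (M * M) - Real.sin ((k - 1) * θ) • M := by
        rw [ih, mul_sub, mul_smul_comm, mul_smul_comm, mul_one]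
      _ = _ := by
        rw [hM]
        push_cast
        rw [hsin, add_sub_cancel_right]
        module

theorem exists_eq_pow_or_eq_neg_pow {R : Type*} [Ring R] {M : R} {p : ℕ → R} (h0 : p 0 = 1)
    (hstep : ∀ m, p (m + 1) = -p m ∨ p (m + 1) = M * p m) (m : ℕ) :
    ∃ k, p m = M ^ k ∨ p m = -M ^ k := by
  induction m with
  | zero => exact ⟨0, .inl (by rw [h0, pow_zero])⟩
  | succ m ih =>
    obtain ⟨k, hk | hk⟩ := ih <;> rcases hstep m with h | h
    · exact ⟨k, .inr (by rw [h, hk])⟩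
    · exact ⟨k + 1, .inl (by rw [h, hk, pow_succ'])⟩
    · exact ⟨k, .inl (by rw [h, hk, neg_neg])⟩
    · exact ⟨k + 1, .inr (by rw [h, hk, mul_neg, pow_succ'])⟩

theorem tendsto_log_div_natCast_of_mem_Icc {u : ℕ → ℝ} {a C : ℝ} (ha : 0 < a)
    (hu : ∀ n, u n ∈ Set.Icc a C) :
    Tendsto (fun n : ℕ => Real.log (u n) / n) atTop (nhds 0) := by
  have hbdd : IsBoundedUnder (· ≤ ·) atTop (norm ∘ fun n => Real.log (u n)) := by
    refine isBoundedUnder_of ⟨max |Real.log a| |Real.log C|, fun n => ?_⟩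
    have hpos : 0 < u n := ha.trans_le (hu n).1
    exact abs_le_max_abs_abs (Real.log_le_log ha (hu n).1) (Real.log_le_log hpos (hu n).2)
  simpa only [div_eq_inv_mul] using tendsto_inv_atTop_nhds_zero_nat.zero_mul_isBoundedUnder_le hbdd

namespace Matrix

theorem norm_mul_le_card_mul {α l m n : Type*} [NormedRing α] [Fintype l] [Fintype m]
    [Fintype n] (A : Matrix l m α) (B : Matrix m n α) :
    ‖A * B‖ ≤ Fintype.card m * ‖A‖ * ‖B‖ := by
  rw [norm_le_iff (by positivity)]
  intro i j
  calc ‖(A * B) i j‖ ≤ ∑ k, ‖A i k‖ * ‖B k j‖ :=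
        (norm_sum_le _ _).trans (Finset.sum_le_sum fun k _ => norm_mul_le _ _)
    _ ≤ ∑ _k : m, ‖A‖ * ‖B‖ := by
        gcongr <;> exact norm_entry_le_entrywise_sup_norm _
    _ = Fintype.card m * ‖A‖ * ‖B‖ := by simp [mul_assoc]

theorem exists_norm_pow_le_of_mul_self_eq {n : Type*} [Fintype n] [DecidableEq n]
    {M : Matrix n n ℝ} {t : ℝ} (ht : |t| < 2) (hM : M * M = t • M - 1) :
    ∃ C, ∀ k : ℕ, ‖M ^ k‖ ≤ C := by
  obtain ⟨ht₁, ht₂⟩ := abs_lt.mp ht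
  set θ := Real.arccos (t / 2)
  have hcos : 2 * Real.cos θ = t := by
    rw [Real.cos_arccos (by linarith) (by linarith)]
    ring
  have hsin : 0 < Real.sin θ :=
    Real.sin_pos_of_pos_of_lt_pi (Real.arccos_pos.mpr (by linarith))
      (Real.arccos_lt_pi.mpr (by linarith))
  refine ⟨(‖M‖ + ‖(1 : Matrix n n ℝ)‖) / Real.sin θ, fun k => ?_⟩
  have hsmul_le : ∀ (x : ℝ) (X : Matrix n n ℝ), ‖Real.sin x • X‖ ≤ ‖X‖ := fun x X => by
    rw [norm_smul]
    exact mul_le_of_le_one_left (norm_nonneg _) (Real.abs_sin_le_one x)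
  rw [le_div_iff₀ hsin, mul_comm, ← abs_of_pos hsin, ← Real.norm_eq_abs, ← norm_smul,
    sin_smul_pow_eq_of_mul_self_eq (hcos ▸ hM)]
  exact (norm_sub_le _ _).trans (add_le_add (hsmul_le _ _) (hsmul_le _ _))

theorem inv_sqrt_two_le_norm_of_det_eq_one {P : Matrix (Fin 2) (Fin 2) ℝ} (hP : P.det = 1) :
    (√2)⁻¹ ≤ ‖P‖ := by
  have hdet := det_le (A := P) (abv := AbsoluteValue.abs) (x := ‖P‖)
    fun i j => (Real.norm_eq_abs _).symm.trans_le (norm_entry_le_entrywise_sup_norm P)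
  simp only [hP, AbsoluteValue.abs_apply, abs_one, Fintype.card_fin, Nat.factorial_two, nsmul_eq_mul,
    Nat.cast_ofNat] at hdet
  rw [inv_le_iff_one_le_mul₀ (by positivity)]
  have hsq : (‖P‖ * √2) ^ 2 = 2 * ‖P‖ ^ 2 := by rw [mul_pow, Real.sq_sqrt zero_le_two]; ring
  nlinarith [mul_nonneg (norm_nonneg P) (Real.sqrt_nonneg 2)]

end Matrix

section TransferMatrix

variable (V : ℤ → ℝ) (E : ℝ)

theorem transferProd_zero : transferProd V E 0 = 1 := by
  simp [transferProd]

theorem transferProd_succ (n : ℕ) :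
    transferProd V E (n + 1) = transferMatrix V E n * transferProd V E n := by
  simp [transferProd, List.range_succ]

theorem det_transferProd (n : ℕ) : (transferProd V E n).det = 1 := by
  induction n with
  | zero => rw [transferProd_zero, det_one]
  | succ n ih => rw [transferProd_succ, det_mul, ih, transferMatrix, det_fin_two_of]; ring

theorem norm_transferMatrix_le (j : ℤ) : ‖transferMatrix V E j‖ ≤ |E - V j| + 1 := by
  rw [norm_le_iff (by positivity)]
  intro i k
  fin_cases i <;> fin_cases k <;> simp [transferMatrix, add_nonneg]

theorem exists_norm_transferProd_le_of_even {r C : ℝ} (hT : ∀ j, ‖transferMatrix V E j‖ ≤ r)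
    (heven : ∀ m, ‖transferProd V E (2 * m)‖ ≤ C) : ∃ C', ∀ n, ‖transferProd V E n‖ ≤ C' := by
  refine ⟨max C (2 * r * C), fun n => ?_⟩
  obtain ⟨m, rfl | rfl⟩ := Nat.even_or_odd' n
  · exact (heven m).trans (le_max_left _ _)
  · have hr : 0 ≤ r := (norm_nonneg _).trans (hT 0)
    calc ‖transferProd V E (2 * m + 1)‖
        ≤ 2 * ‖transferMatrix V E (2 * m : ℕ)‖ * ‖transferProd V E (2 * m)‖ := by
          rw [transferProd_succ]
          simpa using norm_mul_le_card_mul (transferMatrix V E (2 * m : ℕ)) _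
      _ ≤ 2 * r * C := by
          gcongr
          exacts [hT _, heven m]
      _ ≤ _ := le_max_right _ _

end TransferMatrix

def dimerBlock (a : ℝ) : Matrix (Fin 2) (Fin 2) ℝ :=
  !![a * a - 1, -a; a, -1]

theorem dimerBlock_zero : dimerBlock 0 = -1 := by
  ext i j
  fin_cases i <;> fin_cases j <;> simp [dimerBlock]

theorem dimerBlock_mul_self (a : ℝ) :
    dimerBlock a * dimerBlock a = (a * a - 2) • dimerBlock a - 1 := by
  ext i j
  fin_cases i <;> fin_cases j <;> simp [dimerBlock] <;> ring

theorem transferMatrix_succ_mul_transferMatrix {V : ℤ → ℝ} {j : ℤ} (E : ℝ) (h : V (j + 1) = V j) :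
    transferMatrix V E (j + 1) * transferMatrix V E j = dimerBlock (E - V j) := by
  ext i k
  fin_cases i <;> fin_cases k <;> simp [transferMatrix, dimerBlock, h, sub_eq_add_neg]

theorem transferProd_two_mul_eq_pow_or_neg_pow {V : ℤ → ℝ} {E c : ℝ}
    (hpair : ∀ m : ℤ, V (2 * m + 1) = V (2 * m)) (hsite : ∀ j, E - V j = 0 ∨ E - V j = c)
    (m : ℕ) :
    ∃ k, transferProd V E (2 * m) = dimerBlock c ^ k ∨
      transferProd V E (2 * m) = -dimerBlock c ^ k := by
  refine exists_eq_pow_or_eq_neg_pow (p := fun m => transferProd V E (2 * m))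
    (transferProd_zero V E) (fun m => ?_) m
  have hstep : transferProd V E (2 * (m + 1))
      = dimerBlock (E - V (2 * m)) * transferProd V E (2 * m) := by
    rw [mul_add_one, transferProd_succ, transferProd_succ, ← mul_assoc]
    push_cast
    rw [transferMatrix_succ_mul_transferMatrix E (hpair m)]
  rcases hsite (2 * m) with h | h
  · left; rw [hstep, h, dimerBlock_zero, neg_one_mul]
  · right; rw [hstep, h]

theorem sub_eq_zero_or_eq_two_mul_sub {lam E v : ℝ} (hE : E = 0 ∨ E = lam)
    (hv : v = 0 ∨ v = lam) : E - v = 0 ∨ E - v = 2 * E - lam := by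
  rcases hE with hE | hE <;> rcases hv with hv | hv <;> simp [hE, hv, two_mul]

/-- the random dimer model.  For `λ ∈ (−2,2) \ {0}` and a potential with
`V(2n) = V(2n+1) = ω_n ∈ {0, λ}`, the transfer matrix products at energy `E ∈ {0, λ}`
are uniformly bounded in `n`, and consequently the Lyapunov exponent vanishes at these
two energies. -/
theorem random_dimer_bounded_transfer_and_zero_exponent
    (lam : ℝ) (hlam0 : lam ≠ 0) (hlam2 : |lam| < 2)
    (ωseq : ℤ → ℝ) (hωseq : ∀ n : ℤ, ωseq n = 0 ∨ ωseq n = lam)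
    (V : ℤ → ℝ) (hV : ∀ n : ℤ, V (2 * n) = ωseq n ∧ V (2 * n + 1) = ωseq n)
    (E : ℝ) (hE : E = 0 ∨ E = lam) :
    (∃ C : ℝ, ∀ n : ℕ, ‖transferProd V E n‖ ≤ C) ∧
    Tendsto (fun n : ℕ => Real.log ‖transferProd V E n‖ / n) atTop (nhds 0) := by
  set c := 2 * E - lam
  have hpair (m : ℤ) : V (2 * m + 1) = V (2 * m) := (hV m).2.trans (hV m).1.symm
  have hsite (j : ℤ) : E - V j = 0 ∨ E - V j = c := by
    refine sub_eq_zero_or_eq_two_mul_sub hE ?_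
    obtain ⟨m, rfl | rfl⟩ := Int.even_or_odd' j
    exacts [(hV m).1 ▸ hωseq m, (hV m).2 ▸ hωseq m]
  have hc : c * c = lam * lam := by rcases hE with h | h <;> simp only [c, h] <;> ring
  have htrace : |c * c - 2| < 2 := by
    have := abs_lt.mp hlam2
    rw [hc, abs_lt]
    constructor <;> nlinarith [mul_self_pos.mpr hlam0]
  obtain ⟨C, hC⟩ := exists_norm_pow_le_of_mul_self_eq htrace (dimerBlock_mul_self c)
  have heven (m : ℕ) : ‖transferProd V E (2 * m)‖ ≤ C := by
    obtain ⟨k, hk | hk⟩ := transferProd_two_mul_eq_pow_or_neg_pow hpair hsite m <;>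
      simpa only [hk, norm_neg] using hC k
  have hT (j : ℤ) : ‖transferMatrix V E j‖ ≤ |c| + 1 :=
    (norm_transferMatrix_le V E j).trans (by rcases hsite j with h | h <;> simp [h])
  obtain ⟨C', hC'⟩ := exists_norm_transferProd_le_of_even V E hT heven
  exact ⟨⟨C', hC'⟩, tendsto_log_div_natCast_of_mem_Icc (by positivity)
    fun n => ⟨inv_sqrt_two_le_norm_of_det_eq_one (det_transferProd V E n), hC' n⟩⟩
end

section
/- Let T : Ω → Ω be a homeomorphism of a compact metric space, f : Ω → ℝ continuous, and ω₀ ∈ Ω a point whose orbit {Tⁿω₀ : n ∈ ℤ} is dense in Ω. Then for every ω ∈ Ω, the spectrum of the Schrödinger operator H_ω with potential V_ω(n) = f(Tⁿω) is contained in the spectrum of H_{ω₀}. -/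
/-!
Both `H_{T^m ω₀}` and `H_ω` are self-adjoint, and `H_{T^m ω₀}` is unitarily equivalent to
`H_{ω₀}` via the shift by `m`. If `z ∉ σ(H_{ω₀})`, the bound `‖ψ‖ ≤ c ‖(z - H_{ω₀}) ψ‖` therefore
holds for every `H_{T^m ω₀}` with the same `c`. Choosing `T^m ω₀ → ω`, the potentials converge
pointwise and stay bounded, so `H_{T^m ω₀} → H_ω` strongly by dominated convergence, and the bound
passes to `H_ω`. A self-adjoint operator that is bounded below is invertible.
-/

open Filter Topology

theorem Equiv.Perm.continuous_zpow {X : Type*} [TopologicalSpace X] {T : Equiv.Perm X}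
    (hT : Continuous T) (hTinv : Continuous T.symm) (n : ℤ) : Continuous ⇑(T ^ n) := by
  induction n using Int.induction_on with
  | zero => exact continuous_id
  | succ n ih => rw [zpow_add_one, Equiv.Perm.coe_mul]; exact ih.comp hT
  | pred n ih => rw [zpow_sub_one, Equiv.Perm.coe_mul]; exact ih.comp hTinv

section Reindex

variable {ι ι' 𝕜 E : Type*} [NormedAddCommGroup E] {p : ENNReal} [Fact (1 ≤ p)]

theorem Memℓp.comp_equiv {f : ι' → E} (hf : Memℓp f p) (e : ι ≃ ι') : Memℓp (f ∘ e) p := by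
  rcases p.dichotomy with rfl | hp
  · rw [memℓp_infty_iff] at hf ⊢
    rwa [← e.surjective.range_comp (fun i => ‖f i‖)] at hf
  · have hp : 0 < p.toReal := zero_lt_one.trans_le hp
    exact memℓp_gen (e.summable_iff.2 ((memℓp_gen_iff hp).1 hf))

variable [NormedField 𝕜] [NormedSpace 𝕜 E]

def lp.reindex (e : ι ≃ ι') : lp (fun _ : ι' => E) p ≃ₗᵢ[𝕜] lp (fun _ : ι => E) p where
  toFun ψ := ⟨ψ ∘ e, (lp.memℓp ψ).comp_equiv e⟩
  invFun ψ := ⟨ψ ∘ e.symm, (lp.memℓp ψ).comp_equiv e.symm⟩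
  map_add' _ _ := rfl
  map_smul' _ _ := rfl
  left_inv ψ := by ext; simp
  right_inv ψ := by ext; simp
  norm_map' ψ := by
    rcases p.dichotomy with rfl | hp
    · rw [lp.norm_eq_ciSup, lp.norm_eq_ciSup]
      exact e.iSup_comp (g := fun i => ‖ψ i‖)
    · have hp : 0 < p.toReal := zero_lt_one.trans_le hp
      rw [lp.norm_eq_tsum_rpow hp, lp.norm_eq_tsum_rpow hp]
      exact congrArg (· ^ (1 / p.toReal)) (e.tsum_eq (fun i => ‖ψ i‖ ^ p.toReal))

@[simp] theorem lp.reindex_apply (e : ι ≃ ι') (ψ : lp (fun _ : ι' => E) p) (i : ι) :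
    lp.reindex (𝕜 := 𝕜) e ψ i = ψ (e i) := rfl

@[simp] theorem lp.reindex_symm_apply (e : ι ≃ ι') (ψ : lp (fun _ : ι => E) p) (i : ι') :
    (lp.reindex (𝕜 := 𝕜) e).symm ψ i = ψ (e.symm i) := rfl

end Reindex

theorem lp.tendsto_zero_of_dominated {α ι : Type*} {E : ι → Type*}
    [∀ i, NormedAddCommGroup (E i)] {p : ENNReal} [Fact (1 ≤ p)] (hp : p ≠ ⊤) {l : Filter α}
    {F : α → lp E p} {g : ι → ℝ} (hg : Memℓp g p) (hFg : ∀ a i, ‖F a i‖ ≤ g i)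
    (hF : ∀ i, Tendsto (fun a => F a i) l (𝓝 0)) :
    Tendsto F l (𝓝 0) := by
  have hp : 0 < p.toReal := ENNReal.toReal_pos (zero_lt_one.trans_le Fact.out).ne' hp
  have hsum : Tendsto (fun a => ∑' i, ‖F a i‖ ^ p.toReal) l (𝓝 (∑' _ : ι, (0 : ℝ))) := by
    refine tendsto_tsum_of_dominated_convergence ((memℓp_gen_iff hp).1 hg)
      (fun i => ?_) (Eventually.of_forall fun a i => ?_)
    · simpa [Real.zero_rpow hp.ne'] using (hF i).norm.rpow_const (Or.inr hp.le)
    · rw [Real.norm_of_nonneg (by positivity)]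
      exact Real.rpow_le_rpow (norm_nonneg _) ((hFg a i).trans (le_abs_self _)) hp.le
  rw [tendsto_zero_iff_norm_tendsto_zero]
  simp_rw [lp.norm_eq_tsum_rpow hp]
  simpa [Real.zero_rpow (inv_pos.2 hp).ne'] using
    hsum.rpow_const (p := p.toReal⁻¹) (Or.inr (by positivity))

theorem lp.isSelfAdjoint_of_apply_eq_ofReal_mul {𝕜 ι : Type*} [RCLike 𝕜]
    {D : lp (fun _ : ι => 𝕜) 2 →L[𝕜] lp (fun _ : ι => 𝕜) 2} (V : ι → ℝ)
    (hD : ∀ ψ i, D ψ i = V i * ψ i) : IsSelfAdjoint D := by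
  rw [ContinuousLinearMap.isSelfAdjoint_iff', eq_comm, ContinuousLinearMap.eq_adjoint_iff]
  intro x y
  simp only [lp.inner_eq_tsum, hD, RCLike.inner_apply, map_mul, RCLike.conj_ofReal]
  exact tsum_congr fun i => by ring

theorem exists_norm_le_mul_norm_sub_apply_of_notMem_spectrum {𝕜 E : Type*}
    [NontriviallyNormedField 𝕜] [NormedAddCommGroup E] [NormedSpace 𝕜 E] {A : E →L[𝕜] E}
    {z : 𝕜} (hz : z ∉ spectrum 𝕜 A) :
    ∃ c : NNReal, ∀ ψ, ‖ψ‖ ≤ c * ‖(algebraMap 𝕜 (E →L[𝕜] E) z - A) ψ‖ := by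
  obtain ⟨R, hR⟩ := spectrum.notMem_iff.1 hz
  refine ⟨‖(↑R⁻¹ : E →L[𝕜] E)‖₊, fun ψ => ?_⟩
  calc ‖ψ‖ = ‖(↑R⁻¹ * ↑R : E →L[𝕜] E) ψ‖ := by rw [R.inv_mul]; rfl
    _ ≤ _ := by
      rw [← hR]
      exact ContinuousLinearMap.le_opNorm (↑R⁻¹ : E →L[𝕜] E) ((R : E →L[𝕜] E) ψ)

section Hilbert

variable {E : Type*} [NormedAddCommGroup E] [InnerProductSpace ℂ E] [CompleteSpace E]

theorem IsSelfAdjoint.isUnit_of_antilipschitz {A : E →L[ℂ] E} (hA : IsSelfAdjoint A)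
    {c : NNReal} (hc : AntilipschitzWith c A) : IsUnit A := by
  rw [ContinuousLinearMap.isUnit_iff_bijective,
    ContinuousLinearMap.bijective_iff_dense_range_and_antilipschitz]
  refine ⟨?_, c, hc⟩
  rw [Submodule.topologicalClosure_eq_top_iff, ContinuousLinearMap.orthogonal_range,
    ← ContinuousLinearMap.star_eq_adjoint, hA.star_eq, LinearMap.ker_eq_bot]
  exact hc.injective

theorem spectrum_subset_of_tendsto_conjStarAlgEquiv {ι : Type*} {l : Filter ι} [l.NeBot]
    {A B : E →L[ℂ] E} (hB : IsSelfAdjoint B) (U : ι → E ≃ₗᵢ[ℂ] E)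
    (hAB : ∀ ψ, Tendsto (fun k => (U k).conjStarAlgEquiv A ψ) l (𝓝 (B ψ))) :
    spectrum ℂ B ⊆ spectrum ℂ A := by
  intro z hz
  by_contra hzA
  obtain ⟨c, hc⟩ := exists_norm_le_mul_norm_sub_apply_of_notMem_spectrum hzA
  have hconj : ∀ k ψ, ‖ψ‖ ≤ c * ‖(algebraMap ℂ _ z - (U k).conjStarAlgEquiv A) ψ‖ := by
    intro k ψ
    rw [← AlgHomClass.commutes (U k).conjStarAlgEquiv z, ← map_sub,
      LinearIsometryEquiv.conjStarAlgEquiv_apply_apply, LinearIsometryEquiv.norm_map]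
    simpa using hc ((U k).symm ψ)
  have hlim : ∀ ψ, ‖ψ‖ ≤ c * ‖(algebraMap ℂ _ z - B) ψ‖ := fun ψ =>
    ge_of_tendsto (((tendsto_const_nhds.sub (hAB ψ)).norm).const_mul _)
      (Eventually.of_forall fun k => hconj k ψ)
  have hzB : IsSelfAdjoint (algebraMap ℂ (E →L[ℂ] E) z - B) := by
    rw [hB.mem_spectrum_eq_re hz]
    exact (IsSelfAdjoint.algebraMap _ (Complex.conj_ofReal z.re)).sub hB
  exact spectrum.mem_iff.1 hz
    (hzB.isUnit_of_antilipschitz (ContinuousLinearMap.antilipschitz_of_bound _ hlim))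

end Hilbert

local notation "ℓ²(ℤ)" => lp (fun _ : ℤ => ℂ) 2

def IsSchrodingerOp (H : ℓ²(ℤ) →L[ℂ] ℓ²(ℤ)) (V : ℤ → ℝ) : Prop :=
  ∀ ψ n, H ψ n = ψ (n + 1) + ψ (n - 1) + V n * ψ n

namespace IsSchrodingerOp

variable {H H' : ℓ²(ℤ) →L[ℂ] ℓ²(ℤ)} {V V' : ℤ → ℝ}

theorem apply_sub_apply (hH : IsSchrodingerOp H V) (hH' : IsSchrodingerOp H' V') (ψ : ℓ²(ℤ))
    (n : ℤ) : (H ψ - H' ψ) n = (V n - V' n : ℝ) * ψ n := by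
  rw [lp.coeFn_sub, Pi.sub_apply, hH ψ n, hH' ψ n, Complex.ofReal_sub]
  ring

theorem unique (hH : IsSchrodingerOp H V) (hH' : IsSchrodingerOp H' V) : H = H' := by
  ext ψ n
  rw [hH ψ n, hH' ψ n]

theorem isSelfAdjoint (hH : IsSchrodingerOp H V) : IsSelfAdjoint H := by
  set S : ℓ²(ℤ) ≃ₗᵢ[ℂ] ℓ²(ℤ) := lp.reindex (Equiv.addRight 1)
  have hD : IsSelfAdjoint (H - (S + star (S : ℓ²(ℤ) →L[ℂ] ℓ²(ℤ)))) :=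
    lp.isSelfAdjoint_of_apply_eq_ofReal_mul V fun ψ n => by
      simp [S, hH ψ n, ← sub_eq_add_neg]
  simpa using (IsSelfAdjoint.add_star_self (S : ℓ²(ℤ) →L[ℂ] ℓ²(ℤ))).add hD

theorem conjStarAlgEquiv_reindex_addRight (hH : IsSchrodingerOp H V) (m : ℤ) :
    IsSchrodingerOp ((lp.reindex (Equiv.addRight m)).conjStarAlgEquiv H) (V <| · + m) := by
  intro ψ n
  simp only [LinearIsometryEquiv.conjStarAlgEquiv_apply_apply, lp.reindex_apply,
    lp.reindex_symm_apply, Equiv.coe_addRight, Equiv.addRight_symm_apply, hH _ (n + m)]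
  ring_nf

theorem tendsto_apply {α : Type*} {l : Filter α} {H : α → ℓ²(ℤ) →L[ℂ] ℓ²(ℤ)} {V : α → ℤ → ℝ}
    {H₀ : ℓ²(ℤ) →L[ℂ] ℓ²(ℤ)} {V₀ : ℤ → ℝ} (hH : ∀ a, IsSchrodingerOp (H a) (V a))
    (hH₀ : IsSchrodingerOp H₀ V₀) {C : ℝ} (hC : ∀ a n, |V a n - V₀ n| ≤ C)
    (hV : ∀ n, Tendsto (V · n) l (𝓝 (V₀ n))) (ψ : ℓ²(ℤ)) :
    Tendsto (fun a => H a ψ) l (𝓝 (H₀ ψ)) := by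
  rw [← tendsto_sub_nhds_zero_iff]
  refine lp.tendsto_zero_of_dominated ENNReal.ofNat_ne_top ((lp.memℓp ψ).norm.const_mul C)
    (fun a n => ?_) (fun n => ?_)
  · rw [(hH a).apply_sub_apply hH₀, norm_mul, Complex.norm_real, Real.norm_eq_abs]
    exact mul_le_mul_of_nonneg_right (hC a n) (norm_nonneg _)
  · simp_rw [(hH _).apply_sub_apply hH₀]
    have := (Complex.continuous_ofReal.tendsto 0).comp (tendsto_sub_nhds_zero_iff.2 (hV n))
    simpa using this.mul_const (ψ n)

end IsSchrodingerOp

/-- if `T` is a homeomorphism of a compact metric space `Ω`, `f : Ω → ℝ`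
is continuous, and the orbit of `ω₀` is dense, then for every `ω` the spectrum of the
Schrödinger operator `H_ω` with potential `V_ω(n) = f(Tⁿω)` is contained in the
spectrum of `H_{ω₀}`. -/
theorem dense_orbit_spectrum_inclusion
    {Ω : Type*} [MetricSpace Ω] [CompactSpace Ω]
    (T : Equiv.Perm Ω) (hT : Continuous T) (hTinv : Continuous T.symm)
    (f : Ω → ℝ) (hf : Continuous f)
    (Hop : Ω → (lp (fun _ : ℤ => ℂ) 2 →L[ℂ] lp (fun _ : ℤ => ℂ) 2))
    (hHop : ∀ (ω : Ω) (ψ : lp (fun _ : ℤ => ℂ) 2) (n : ℤ),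
      (Hop ω ψ : ∀ _ : ℤ, ℂ) n
        = (ψ : ∀ _ : ℤ, ℂ) (n + 1) + (ψ : ∀ _ : ℤ, ℂ) (n - 1)
          + (f ((T ^ n) ω) : ℂ) * (ψ : ∀ _ : ℤ, ℂ) n)
    (ω₀ : Ω) (hdense : Dense {x : Ω | ∃ n : ℤ, (T ^ n) ω₀ = x}) :
    ∀ ω : Ω, spectrum ℂ (Hop ω) ⊆ spectrum ℂ (Hop ω₀) := by
  intro ω
  have hSch : ∀ x, IsSchrodingerOp (Hop x) fun n => f ((T ^ n) x) := hHop
  have hcov : ∀ m : ℤ,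
      Hop ((T ^ m) ω₀) = (lp.reindex (Equiv.addRight m)).conjStarAlgEquiv (Hop ω₀) := fun m =>
    (hSch _).unique <| by
      simpa only [← Equiv.Perm.mul_apply, ← zpow_add] using
        (hSch ω₀).conjStarAlgEquiv_reindex_addRight m
  obtain ⟨C, hC⟩ := Metric.isBounded_iff.1 (isCompact_range hf).isBounded
  let l := comap (fun m : ℤ => (T ^ m) ω₀) (𝓝 ω)
  have : l.NeBot := comap_neBot fun t ht => by
    obtain ⟨-, ⟨m, rfl⟩, htm⟩ := hdense.inter_nhds_nonempty ht
    exact ⟨m, htm⟩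
  refine spectrum_subset_of_tendsto_conjStarAlgEquiv (l := l) (hSch ω).isSelfAdjoint
    (fun m => lp.reindex (Equiv.addRight m)) fun ψ => ?_
  simp_rw [← hcov]
  exact IsSchrodingerOp.tendsto_apply (fun m => hSch _) (hSch ω)
    (fun _ _ => (Real.dist_eq _ _).symm.trans_le (hC (Set.mem_range_self _) (Set.mem_range_self _)))
    (fun n => ((hf.comp (Equiv.Perm.continuous_zpow hT hTinv n)).tendsto ω).comp tendsto_comap) ψ
end
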